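/- Let S be a finite set of points in general position with both s and t lying on the boundary of the convex hull of S, s ≠ t. Then there exists a plane straight-line spanning path of S starting at s and ending at t, obtained by rotating a line around the intersection point of supporting lines at s and t. -/

import Mathlib

/-- Points in the plane. -/
abbrev Pt := ℝ × ℝ

/-- No three distinct points of `S` are collinear. -/
def GenPos (S : Set Pt) : Prop :=
  ∀ a ∈ S, ∀ b ∈ S, ∀ c ∈ S, a ≠ b → a ≠ c → b ≠ c →
    ¬ Collinear ℝ ({a, b, c} : Set Pt)

/-- A point `p` outside the hull sees `q ∈ S` if the segment `pq` meets
the convex hull of `S` exactly in `{q}`. -/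
def Sees (p q : Pt) (S : Set Pt) : Prop :=
  segment ℝ p q ∩ convexHull ℝ S = {q}

/-- The set of points of `S` seen from `p`. -/
def SeenSet (p : Pt) (S : Set Pt) : Set Pt := {q ∈ S | Sees p q S}

/-- `x` is an extreme point of `S`. -/
def ExtremePt (S : Set Pt) (x : Pt) : Prop := x ∈ S ∧ x ∉ convexHull ℝ (S \ {x})

/-- `ab` is an edge of the boundary of the convex hull of `S`. -/
def HullEdge (S : Set Pt) (a b : Pt) : Prop :=
  a ∈ S ∧ b ∈ S ∧ a ≠ b ∧ segment ℝ a b ⊆ frontier (convexHull ℝ S)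

/-- A list enumerating the extreme points of `S` in cyclic convex-position
order along the boundary of the convex hull. -/
def HullCycle (S : Set Pt) (l : List Pt) : Prop :=
  l.Nodup ∧ {x | x ∈ l} = {x | ExtremePt S x} ∧
    ∀ i < l.length, HullEdge S l[i]! l[(i + 1) % l.length]!

/-- A contiguous arc along the boundary of the hull of `S`
beginning in `a` and ending in `c`. -/
def Arc (S : Set Pt) (a c : Pt) (A : List Pt) : Prop :=
  ∃ l, HullCycle S l ∧ ∃ k ≤ l.length,
    A = l.take k ∧ A.head? = some a ∧ A.getLast? = some c

/-- The (undirected) edges of the path given by the list `l`. -/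
def edgeSet (l : List Pt) : Set (Set Pt) :=
  {e | ∃ p ∈ l.zip l.tail, e = ({p.1, p.2} : Set Pt)}

/-- The straight-line drawing of the path `l` is crossing-free: two edges meet
only in common endpoints. -/
def PlaneList (l : List Pt) : Prop :=
  ∀ i j : ℕ, i < j → j + 1 < l.length →
    segment ℝ l[i]! l[i + 1]! ∩ segment ℝ l[j]! l[j + 1]! ⊆
      ({l[i]!, l[i + 1]!} ∩ {l[j]!, l[j + 1]!} : Set Pt)

/-- `l` visits every point of `S` exactly once. -/
def IsSpanningPath (S : Set Pt) (l : List Pt) : Prop :=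
  l.Nodup ∧ {x | x ∈ l} = S

/-- A crossing-free straight-line spanning path of `S`. -/
def PlaneSpanningPath (S : Set Pt) (l : List Pt) : Prop :=
  IsSpanningPath S l ∧ PlaneList l

/-- Two paths are edge-disjoint if no segment is an edge of both. -/
def EdgeDisjoint (P Q : List Pt) : Prop := ∀ e ∈ edgeSet P, e ∉ edgeSet Q

/-- `S` admits three pairwise edge-disjoint plane spanning paths. -/
def ThreePaths (S : Set Pt) : Prop :=
  ∃ P Q R : List Pt,
    PlaneSpanningPath S P ∧ PlaneSpanningPath S Q ∧ PlaneSpanningPath S R ∧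
    EdgeDisjoint P Q ∧ EdgeDisjoint P R ∧ EdgeDisjoint Q R

/-- `(S₁, S₂)` is a balanced separated partition of `S`. -/
def BSP (S S₁ S₂ : Finset Pt) : Prop :=
  S₁ ∪ S₂ = S ∧ Disjoint S₁ S₂ ∧
  (S₁.card : ℤ) - S₂.card ≤ 1 ∧ (S₂.card : ℤ) - S₁.card ≤ 1 ∧
  Disjoint (convexHull ℝ (S₁ : Set Pt)) (convexHull ℝ (S₂ : Set Pt))

/-- `ab` is an edge of the visibility graph `V(S₁,S₂)`. -/
def VisEdge (S₁ S₂ : Finset Pt) (a b : Pt) : Prop :=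
  a ∈ S₁ ∧ b ∈ S₂ ∧
  segment ℝ a b ∩ (convexHull ℝ (S₁ : Set Pt) ∪ convexHull ℝ (S₂ : Set Pt))
    = ({a, b} : Set Pt)

/-- Two segments cross: their open segments share a point. -/
def SegCross (a b c d : Pt) : Prop :=
  (openSegment ℝ a b ∩ openSegment ℝ c d).Nonempty

/-- Consecutive vertices of `l` alternate between `S₁` and `S₂`. -/
def Alternating (S₁ S₂ : Finset Pt) (l : List Pt) : Prop :=
  ∀ i, i + 1 < l.length →
    (l[i]! ∈ S₁ ∧ l[i + 1]! ∈ S₂) ∨ (l[i]! ∈ S₂ ∧ l[i + 1]! ∈ S₁)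

/-- A zig-zag path for the balanced separated partition `(S₁,S₂)` of `S`. -/
def ZigZag (S S₁ S₂ : Finset Pt) (l : List Pt) : Prop :=
  PlaneSpanningPath (S : Set Pt) l ∧ Alternating S₁ S₂ l

/-- Twice the signed area of the triangle `a b c`; positive iff `c` lies to the
left of the directed line `ab`. -/
def ccw (a b c : Pt) : ℝ :=
  (b.1 - a.1) * (c.2 - a.2) - (b.2 - a.2) * (c.1 - a.1)

/-- `uv` is a halving segment of `S`: the line through `u` and `v` has exactly
`(|S| - 2)/2` points of `S` strictly on each side. -/
def Halving (S : Finset Pt) (u v : Pt) : Prop :=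
  u ∈ S ∧ v ∈ S ∧ u ≠ v ∧
  2 * ((S : Set Pt) ∩ {s | 0 < ccw u v s}).ncard = S.card - 2 ∧
  2 * ((S : Set Pt) ∩ {s | ccw u v s < 0}).ncard = S.card - 2

/-- The wheel configuration: all points but one in convex position, and one
interior point `y` such that every line through `y` and another point of the
configuration halves the remaining points. -/
def IsWheel (S : Finset Pt) : Prop :=
  ∃ y ∈ S,
    (∀ x ∈ S.erase y, x ∉ convexHull ℝ (((S.erase y : Finset Pt) : Set Pt) \ {x})) ∧
    y ∈ interior (convexHull ℝ ((S.erase y : Finset Pt) : Set Pt)) ∧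
    ∀ x ∈ S.erase y, Halving S y x

/-- `v` is a switchable path for the balanced separated partition `(S₁,S₂)` of
`S`: its edges are visibility edges, they cross a separating line of the
partition in order along the line, and every open triangle spanned by three
consecutive vertices contains no point of `S`. -/
def Switchable (S S₁ S₂ : Finset Pt) (v : List Pt) : Prop :=
  2 ≤ v.length ∧
  (∀ i, i + 1 < v.length →
    VisEdge S₁ S₂ v[i]! v[i + 1]! ∨ VisEdge S₁ S₂ v[i + 1]! v[i]!) ∧
  (∃ (f : Pt →ₗ[ℝ] ℝ) (c : ℝ),
    (∀ x ∈ S₁, f x < c) ∧ (∀ x ∈ S₂, c < f x) ∧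
    ∃ x : ℕ → Pt,
      (∀ i, i + 1 < v.length → x i ∈ segment ℝ v[i]! v[i + 1]! ∧ f (x i) = c) ∧
      ∃ g : Pt →ₗ[ℝ] ℝ, ∀ i j, i < j → j + 1 < v.length → g (x i) < g (x j)) ∧
  ∀ i, i + 2 < v.length →
    ∀ s ∈ S, s ∉ interior (convexHull ℝ ({v[i]!, v[i + 1]!, v[i + 2]!} : Set Pt))

/-- `u` is a bridged vertex of the partition `(S₁,S₂)` of `S`: an endpoint of an
edge of the boundary of `conv S` with one endpoint in each class. -/
def Bridged (S S₁ S₂ : Finset Pt) (u : Pt) : Prop :=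
  ∃ w, HullEdge (S : Set Pt) u w ∧
    ((u ∈ S₁ ∧ w ∈ S₂) ∨ (u ∈ S₂ ∧ w ∈ S₁))

/-- `u` is incident with at least two edges of the visibility graph. -/
def IncidentVisEdges2 (S₁ S₂ : Finset Pt) (u : Pt) : Prop :=
  ∃ w₁ w₂, w₁ ≠ w₂ ∧
    (VisEdge S₁ S₂ u w₁ ∨ VisEdge S₁ S₂ w₁ u) ∧
    (VisEdge S₁ S₂ u w₂ ∨ VisEdge S₁ S₂ w₂ u)

/-!
Both endpoints are extreme points of `S`, since in general position a point of `S` on the boundary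
of the hull cannot lie in the hull of the others. Induct on `|S|`. As `s` is extreme, `S \ {s}` lies
strictly on one side of a line through `s`; rotating that line about `s`, the first and the last
point of `S \ {s}` it meets are the two hull neighbours of `s`. If both were `t`, all of `S` would
lie on the line `s t`, so one of them, `u`, differs from `t`. All points other than `s` and `u` lie
strictly on one side of the line `s u`: hence the edge `s u` meets the segments between points
of `S \ {s}` only in `u`, and `u` is an extreme point of `S \ {s}`. Prepend `s` to a path from `u`
to `t` through `S \ {s}`.
-/

open Set Module

section Collinear

variable {E : Type*} [AddCommGroup E] [Module ℝ E] [FiniteDimensional ℝ E]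

theorem collinear_of_affineSpan_ne_top (hE : finrank ℝ E = 2) {A : Set E}
    (hA : affineSpan ℝ A ≠ ⊤) : Collinear ℝ A := by
  rcases A.eq_empty_or_nonempty with rfl | hne
  · exact collinear_empty ℝ E
  have hV : vectorSpan ℝ A ≠ ⊤ := fun h =>
    hA ((AffineSubspace.affineSpan_eq_top_iff_vectorSpan_eq_top_of_nonempty ℝ E E hne).2 h)
  have := Submodule.finrank_lt hV
  rw [collinear_iff_finrank_le_one]
  omega

theorem collinear_of_forall_apply_eq (hE : finrank ℝ E = 2) {f : E →ₗ[ℝ] ℝ} (hf : f ≠ 0)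
    {A : Set E} {c : ℝ} (hA : ∀ x ∈ A, f x = c) : Collinear ℝ A := by
  have hle : vectorSpan ℝ A ≤ LinearMap.ker f := by
    rw [vectorSpan_def, Submodule.span_le]
    rintro _ ⟨x, hx, y, hy, rfl⟩
    simp [hA x hx, hA y hy]
  have := Submodule.finrank_mono hle
  have := Module.Dual.finrank_ker_add_one_of_ne_zero hf
  rw [collinear_iff_finrank_le_one]
  omega

end Collinear

theorem finrank_pt : finrank ℝ Pt = 2 := by simp

def perpDot (u : Pt) : Pt →ₗ[ℝ] ℝ := u.1 • LinearMap.snd ℝ ℝ ℝ - u.2 • LinearMap.fst ℝ ℝ ℝ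

@[simp]
theorem perpDot_apply (u v : Pt) : perpDot u v = u.1 * v.2 - u.2 * v.1 := rfl

theorem perpDot_ne_zero {u : Pt} (hu : u ≠ 0) : perpDot u ≠ 0 := by
  intro h
  have h' : perpDot u (-u.2, u.1) = 0 := by rw [h]; rfl
  simp only [perpDot_apply] at h'
  apply hu
  ext <;> simp only [Prod.fst_zero, Prod.snd_zero] <;> nlinarith [sq_nonneg u.1, sq_nonneg u.2]

theorem ccw_eq_perpDot_sub (a b c : Pt) : ccw a b c = perpDot (b - a) c - perpDot (b - a) a := by
  simp only [ccw, perpDot_apply, Prod.fst_sub, Prod.snd_sub]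
  ring

theorem ccw_eq_zero_right (a b : Pt) : ccw a b b = 0 := by
  unfold ccw
  ring

theorem collinear_of_ccw_eq_zero {a b c : Pt} (h : ccw a b c = 0) :
    Collinear ℝ ({a, b, c} : Set Pt) := by
  rcases eq_or_ne b a with rfl | hab
  · simpa using collinear_pair ℝ b c
  refine collinear_of_forall_apply_eq finrank_pt (perpDot_ne_zero (sub_ne_zero.2 hab))
    (c := perpDot (b - a) a) ?_
  rintro x (rfl | rfl | rfl)
  · rfl
  · linarith [ccw_eq_perpDot_sub a x x, ccw_eq_zero_right a x]
  · linarith [ccw_eq_perpDot_sub a b x]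

theorem GenPos.ccw_ne_zero {A : Set Pt} (hA : GenPos A) {a b c : Pt} (ha : a ∈ A) (hb : b ∈ A)
    (hc : c ∈ A) (hab : a ≠ b) (hac : a ≠ c) (hbc : b ≠ c) : ccw a b c ≠ 0 :=
  fun h => hA a ha b hb c hc hab hac hbc (collinear_of_ccw_eq_zero h)

theorem GenPos.mono {A B : Set Pt} (hB : GenPos B) (hAB : A ⊆ B) : GenPos A :=
  fun a ha b hb c hc => hB a (hAB ha) b (hAB hb) c (hAB hc)

theorem ExtremePt.subset {A B : Set Pt} {x : Pt} (hx : ExtremePt B x) (hxA : x ∈ A)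
    (hAB : A ⊆ B) : ExtremePt A x :=
  ⟨hxA, fun h => hx.2 (convexHull_mono (sdiff_subset_sdiff_left hAB) h)⟩

theorem extremePt_of_forall_apply_lt {A : Set Pt} {u : Pt} (hu : u ∈ A) (f : Pt →ₗ[ℝ] ℝ)
    (h : ∀ x ∈ A, x ≠ u → f x < f u) : ExtremePt A u :=
  ⟨hu, fun hmem => lt_irrefl (f u)
    (convexHull_min (fun x hx => h x hx.1 hx.2) (convex_halfSpace_lt f.isLinear (f u)) hmem :)⟩

theorem AffineBasis.sum_smul_mem_interior_convexHull {ι E : Type*} [Fintype ι]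
    [NormedAddCommGroup E] [NormedSpace ℝ E] (b : AffineBasis ι ℝ E) {w : ι → ℝ}
    (hw₀ : ∀ i, 0 < w i) (hw₁ : ∑ i, w i = 1) :
    ∑ i, w i • b i ∈ interior (convexHull ℝ (range b)) := by
  rw [b.interior_convexHull]
  intro i
  rw [← Finset.univ.affineCombination_eq_linear_combination b w hw₁,
    b.coord_apply_combination_of_mem (Finset.mem_univ i) hw₁]
  exact hw₀ i

/-- By Carathéodory, a point of `conv (A \ {s})` is a positive combination of affinely independent
points of `A \ {s}`: three of them put `s` in the interior, fewer put it on a line with two of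
them. -/
theorem GenPos.extremePt_of_mem_frontier {A : Set Pt} (hA : GenPos A) {s : Pt} (hs : s ∈ A)
    (hfr : s ∈ frontier (convexHull ℝ A)) : ExtremePt A s := by
  refine ⟨hs, fun hmem => ?_⟩
  obtain ⟨ι, _, z, w, hzA, hz, hw₀, hw₁, hws⟩ := eq_pos_convex_span_of_mem_convexHull hmem
  by_cases htop : affineSpan ℝ (range z) = ⊤
  · apply hfr.2
    rw [← hws]
    exact interior_mono (convexHull_mono (hzA.trans sdiff_subset))
      ((⟨z, hz, htop⟩ : AffineBasis ι ℝ Pt).sum_smul_mem_interior_convexHull hw₀ hw₁)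
  have hs_span : s ∈ affineSpan ℝ (range z) := by
    rw [← hws, ← Finset.univ.affineCombination_eq_linear_combination z w hw₁]
    exact affineCombination_mem_affineSpan hw₁ z
  have hcol : Collinear ℝ (insert s (range z)) := by
    rw [collinear_insert_iff_of_mem_affineSpan hs_span]
    exact collinear_of_affineSpan_ne_top finrank_pt htop
  have hzs : ∀ j, z j ≠ s := fun j => (hzA ⟨j, rfl⟩).2
  obtain ⟨i⟩ : Nonempty ι := by
    by_contra h
    simp [not_nonempty_iff.1 h] at hw₁
  obtain ⟨j, hji⟩ : ∃ j, z j ≠ z i := by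
    by_contra! h
    apply hzs i
    simp_rw [← hws, h, ← Finset.sum_smul, hw₁, one_smul]
  refine hA (z j) (hzA ⟨j, rfl⟩).1 (z i) (hzA ⟨i, rfl⟩).1 s hs hji (hzs j) (hzs i)
    (hcol.subset ?_)
  rintro _ (rfl | rfl | rfl)
  exacts [Or.inr ⟨j, rfl⟩, Or.inr ⟨i, rfl⟩, Or.inl rfl]

theorem ExtremePt.exists_forall_ccw_pos {A : Set Pt} (hA : A.Finite) {s : Pt}
    (hs : ExtremePt A s) : ∃ r : Pt, ∀ x ∈ A, x ≠ s → 0 < ccw s r x := by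
  obtain ⟨f, c, hf, hfs⟩ := geometric_hahn_banach_closed_point (convex_convexHull ℝ (A \ {s}))
    (hA.sdiff.isCompact_convexHull (𝕜 := ℝ)).isClosed hs.2
  have hf_apply : ∀ y : Pt, f y = f (1, 0) * y.1 + f (0, 1) * y.2 := fun y => by
    conv_lhs => rw [show y = y.1 • ((1 : ℝ), (0 : ℝ)) + y.2 • ((0 : ℝ), (1 : ℝ)) by ext <;> simp]
    rw [map_add, map_smul, map_smul, smul_eq_mul, smul_eq_mul]
    ring
  refine ⟨s + (-f (0, 1), f (1, 0)), fun x hx hxs => ?_⟩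
  have hfx : f x < f s := (hf x (subset_convexHull ℝ _ ⟨hx, hxs⟩)).trans hfs
  have hccw : ccw s (s + (-f (0, 1), f (1, 0))) x = f s - f x := by
    rw [hf_apply s, hf_apply x]
    simp only [ccw, Prod.fst_add, Prod.snd_add]
    ring
  linarith

/-- The cotangent of the oriented angle at `s` from the ray `s r` to the ray `s x`. -/
noncomputable def cotAngle (s r x : Pt) : ℝ :=
  ((r.1 - s.1) * (x.1 - s.1) + (r.2 - s.2) * (x.2 - s.2)) / ccw s r x

theorem cotAngle_le_cotAngle_iff {s r v x : Pt} (hv : 0 < ccw s r v) (hx : 0 < ccw s r x) :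
    cotAngle s r x ≤ cotAngle s r v ↔ 0 ≤ ccw s v x := by
  have hr : 0 < (r.1 - s.1) ^ 2 + (r.2 - s.2) ^ 2 := by
    by_contra! h
    have h₁ : r.1 - s.1 = 0 := by nlinarith [sq_nonneg (r.1 - s.1), sq_nonneg (r.2 - s.2)]
    have h₂ : r.2 - s.2 = 0 := by nlinarith [sq_nonneg (r.1 - s.1), sq_nonneg (r.2 - s.2)]
    simp [ccw, h₁, h₂] at hv
  have key : ((r.1 - s.1) * (v.1 - s.1) + (r.2 - s.2) * (v.2 - s.2)) * ccw s r x
      - ((r.1 - s.1) * (x.1 - s.1) + (r.2 - s.2) * (x.2 - s.2)) * ccw s r v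
      = ((r.1 - s.1) ^ 2 + (r.2 - s.2) ^ 2) * ccw s v x := by
    unfold ccw
    ring
  rw [cotAngle, cotAngle, div_le_div_iff₀ hx hv, ← sub_nonneg, key]
  exact ⟨fun h => nonneg_of_mul_nonneg_right h hr, mul_nonneg hr.le⟩

theorem exists_extreme_rays {T : Finset Pt} (hT : T.Nonempty) {s r : Pt}
    (hr : ∀ x ∈ T, 0 < ccw s r x) :
    ∃ v₁ ∈ T, ∃ v₂ ∈ T, (∀ x ∈ T, 0 ≤ ccw s v₁ x) ∧ ∀ x ∈ T, 0 ≤ ccw v₂ s x := by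
  obtain ⟨v₁, hv₁, hmax⟩ := T.exists_max_image (cotAngle s r) hT
  obtain ⟨v₂, hv₂, hmin⟩ := T.exists_min_image (cotAngle s r) hT
  refine ⟨v₁, hv₁, v₂, hv₂, fun x hx => ?_, fun x hx => ?_⟩
  · exact (cotAngle_le_cotAngle_iff (hr v₁ hv₁) (hr x hx)).1 (hmax x hx)
  · have hcyc : ccw v₂ s x = ccw s x v₂ := by
      unfold ccw
      ring
    rw [hcyc]
    exact (cotAngle_le_cotAngle_iff (hr x hx) (hr v₂ hv₂)).1 (hmin x hx)

theorem GenPos.exists_supporting_functional {A : Set Pt} (hA : GenPos A) {a b : Pt}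
    (ha : a ∈ A) (hb : b ∈ A) (hab : a ≠ b) (h : ∀ x ∈ A, x ≠ a → x ≠ b → 0 ≤ ccw a b x) :
    ∃ f : Pt →ₗ[ℝ] ℝ, f b = f a ∧ ∀ x ∈ A, x ≠ a → x ≠ b → f x < f a := by
  refine ⟨-perpDot (b - a), ?_, fun x hx hxa hxb => ?_⟩
  · have := ccw_eq_perpDot_sub a b b
    rw [ccw_eq_zero_right] at this
    simp only [LinearMap.neg_apply]
    linarith
  · have hpos := (h x hx hxa hxb).lt_of_ne (hA.ccw_ne_zero ha hb hx hab hxa.symm hxb.symm).symm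
    have := ccw_eq_perpDot_sub a b x
    simp only [LinearMap.neg_apply]
    linarith

theorem GenPos.exists_supporting_edge_ne {S : Finset Pt} (hS : GenPos (S : Set Pt))
    {s r t : Pt} (hs : s ∈ S) (hr : ∀ x ∈ S, x ≠ s → 0 < ccw s r x) (ht : t ∈ S)
    (hts : t ≠ s) (h3 : 3 ≤ S.card) :
    ∃ u ∈ S, u ≠ s ∧ u ≠ t ∧ ∃ f : Pt →ₗ[ℝ] ℝ, f u = f s ∧
      ∀ x ∈ S, x ≠ s → x ≠ u → f x < f s := by
  classical
  have hT : (S.erase s).Nonempty := ⟨t, Finset.mem_erase.2 ⟨hts, ht⟩⟩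
  obtain ⟨v₁, hv₁, v₂, hv₂, h₁, h₂⟩ := exists_extreme_rays hT fun x hx =>
    hr x (Finset.mem_of_mem_erase hx) (Finset.ne_of_mem_erase hx)
  obtain ⟨hv₁s, hv₁S⟩ := Finset.mem_erase.1 hv₁
  obtain ⟨hv₂s, hv₂S⟩ := Finset.mem_erase.1 hv₂
  by_cases hv₁t : v₁ = t
  · by_cases hv₂t : v₂ = t
    · rw [hv₁t] at h₁
      rw [hv₂t] at h₂
      obtain ⟨x, hx, hxv⟩ := (S.erase s).exists_mem_ne
        (by rw [Finset.card_erase_of_mem hs]; omega) t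
      have hswap : ccw t s x = -ccw s t x := by
        unfold ccw
        ring
      obtain ⟨hxs, hxS⟩ := Finset.mem_erase.1 hx
      refine (hS.ccw_ne_zero hs ht hxS hts.symm hxs.symm hxv.symm ?_).elim
      linarith [h₁ x hx, h₂ x hx]
    obtain ⟨f, hf, hfx⟩ := hS.exists_supporting_functional hv₂S hs hv₂s
      fun x hx hxv hxs => h₂ x (Finset.mem_erase.2 ⟨hxs, hx⟩)
    exact ⟨v₂, hv₂S, hv₂s, hv₂t, f, hf.symm, fun x hx hxs hxv => hf ▸ hfx x hx hxv hxs⟩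
  obtain ⟨f, hf, hfx⟩ := hS.exists_supporting_functional hs hv₁S hv₁s.symm
    fun x hx hxs _ => h₁ x (Finset.mem_erase.2 ⟨hxs, hx⟩)
  exact ⟨v₁, hv₁S, hv₁s, hv₁t, f, hf, hfx⟩

section Segment

variable {E : Type*} [AddCommGroup E] [Module ℝ E]

theorem apply_eq_of_mem_segment (f : E →ₗ[ℝ] ℝ) {a b x : E} (hab : f b = f a)
    (hx : x ∈ segment ℝ a b) : f x = f a := by
  obtain ⟨μ, ν, -, -, hμν, rfl⟩ := hx
  rw [map_add, map_smul, map_smul, smul_eq_mul, smul_eq_mul, hab, ← add_mul, hμν, one_mul]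

theorem eq_right_of_mem_segment_of_apply_lt (f : E →ₗ[ℝ] ℝ) {p q x : E} {c : ℝ}
    (hp : f p < c) (hq : f q ≤ c) (hx : x ∈ segment ℝ p q) (hfx : c ≤ f x) : x = q := by
  obtain ⟨μ, ν, hμ, hν, hμν, rfl⟩ := hx
  rw [map_add, map_smul, map_smul, smul_eq_mul, smul_eq_mul] at hfx
  obtain rfl : μ = 0 := by
    refine le_antisymm (not_lt.1 fun hμ' => ?_) hμ
    have hc : μ * c + ν * c = c := by rw [← add_mul, hμν, one_mul]
    linarith [mul_lt_mul_of_pos_left hp hμ', mul_le_mul_of_nonneg_left hq hν]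
  obtain rfl : ν = 1 := by linarith
  simp

theorem segment_inter_segment_subset (f : E →ₗ[ℝ] ℝ) {s u p q : E} (hu : f u = f s)
    (hp : f p < f s ∨ p = u) (hq : f q < f s ∨ q = u) (hpq : p ≠ q) :
    segment ℝ s u ∩ segment ℝ p q ⊆ {s, u} ∩ {p, q} := by
  rintro x ⟨hxsu, hxpq⟩
  have hfx := (apply_eq_of_mem_segment f hu hxsu).ge
  rcases hp with hp | rfl
  · rcases hq with hq | rfl
    · obtain rfl := eq_right_of_mem_segment_of_apply_lt f hp hq.le hxpq hfx
      exact absurd hfx hq.not_ge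
    · obtain rfl := eq_right_of_mem_segment_of_apply_lt f hp hu.le hxpq hfx
      simp
  · rcases hq with hq | rfl
    · rw [segment_symm] at hxpq
      obtain rfl := eq_right_of_mem_segment_of_apply_lt f hq hu.le hxpq hfx
      simp
    · exact absurd rfl hpq

end Segment

theorem IsSpanningPath.cons {A : Set Pt} {l : List Pt} {s : Pt} (hl : IsSpanningPath A l)
    (hs : s ∉ A) : IsSpanningPath (insert s A) (s :: l) := by
  obtain ⟨hnd, hset⟩ := hl
  subst hset
  exact ⟨List.nodup_cons.2 ⟨hs, hnd⟩, by ext; simp⟩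

theorem PlaneList.cons {l : List Pt} (hl : PlaneList l) {s : Pt}
    (h : ∀ j, j + 1 < l.length →
      segment ℝ s l[0]! ∩ segment ℝ l[j]! l[j + 1]! ⊆ {s, l[0]!} ∩ {l[j]!, l[j + 1]!}) :
    PlaneList (s :: l) := by
  rintro (_ | i) j hij hj
  · obtain ⟨j, rfl⟩ : ∃ j', j = j' + 1 := ⟨j - 1, by omega⟩
    simpa using h j (by simpa using hj)
  · obtain ⟨j, rfl⟩ : ∃ j', j = j' + 1 := ⟨j - 1, by omega⟩
    simpa using hl i j (by omega) (by simpa using hj)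

theorem PlaneSpanningPath.cons {S : Finset Pt} {s u : Pt} {l : List Pt}
    (hl : PlaneSpanningPath ↑(S.erase s) (u :: l)) (hs : s ∈ S) {f : Pt →ₗ[ℝ] ℝ}
    (hfu : f u = f s) (hf : ∀ x ∈ S, x ≠ s → x ≠ u → f x < f s) :
    PlaneSpanningPath ↑S (s :: u :: l) := by
  obtain ⟨hspan, hplane⟩ := hl
  have hside : ∀ x ∈ u :: l, f x < f s ∨ x = u := fun x hx => by
    have hx' : x ∈ (↑(S.erase s) : Set Pt) := hspan.2 ▸ hx
    obtain ⟨hxs, hxS⟩ := Finset.mem_erase.1 hx'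
    by_cases hxu : x = u
    exacts [Or.inr hxu, Or.inl (hf x hxS hxs hxu)]
  refine ⟨?_, hplane.cons fun j hj => ?_⟩
  · have := hspan.cons (s := s) (by simp)
    rwa [← Finset.coe_insert, Finset.insert_erase hs] at this
  · rw [getElem!_pos _ j (by omega), getElem!_pos _ (j + 1) hj]
    refine segment_inter_segment_subset f hfu (hside _ (List.getElem_mem _))
      (hside _ (List.getElem_mem _)) ?_
    rw [Ne, hspan.1.getElem_inj_iff]
    omega

theorem planeSpanningPath_pair {s t : Pt} (hst : s ≠ t) : PlaneSpanningPath {s, t} [s, t] :=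
  ⟨⟨by simp [hst], by ext; simp⟩, fun i j hij hj => by simp at hj; omega⟩

theorem GenPos.exists_planeSpanningPath {S : Finset Pt} (hS : GenPos (S : Set Pt)) {s t : Pt}
    (hs : ExtremePt S s) (ht : ExtremePt S t) (hst : s ≠ t) :
    ∃ l : List Pt, PlaneSpanningPath S l ∧ l.head? = some s ∧ l.getLast? = some t := by
  classical
  induction S using Finset.strongInduction generalizing s with
  | H S ih =>
  rcases le_or_gt S.card 2 with h2 | h3
  · have hpair : {s, t} = S := Finset.eq_of_subset_of_card_le
      (Finset.insert_subset_iff.2 ⟨hs.1, Finset.singleton_subset_iff.2 ht.1⟩)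
      (by rwa [Finset.card_pair hst])
    refine ⟨[s, t], ?_, rfl, rfl⟩
    rw [← hpair, Finset.coe_pair]
    exact planeSpanningPath_pair hst
  obtain ⟨r, hr⟩ := hs.exists_forall_ccw_pos S.finite_toSet
  obtain ⟨u, huS, hus, hut, f, hfu, hf⟩ := hS.exists_supporting_edge_ne hs.1 hr ht.1 hst.symm h3
  have hT : ((S.erase s : Finset Pt) : Set Pt) ⊆ S := by simp
  have hu : ExtremePt (S.erase s : Finset Pt) u :=
    extremePt_of_forall_apply_lt (by simp [hus, huS]) f fun x hx hxu => by
      obtain ⟨hxs, hxS⟩ := Finset.mem_erase.1 hx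
      exact hfu ▸ hf x hxS hxs hxu
  have ht' : ExtremePt (S.erase s : Finset Pt) t := ht.subset (by simp [ht.1, hst.symm]) hT
  obtain ⟨_ | ⟨v, l⟩, hl, hhead, hlast⟩ :=
    ih _ (Finset.erase_ssubset hs.1) (hS.mono hT) hu ht' hut
  · simp at hhead
  obtain rfl : v = u := by simpa using hhead
  exact ⟨s :: v :: l, hl.cons hs.1 hfu hf, rfl, by simpa using hlast⟩

theorem stmt_4 (S : Finset Pt) (hgp : GenPos (S : Set Pt))
    (s t : Pt) (hs : s ∈ S) (ht : t ∈ S) (hst : s ≠ t)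
    (hsb : s ∈ frontier (convexHull ℝ (S : Set Pt)))
    (htb : t ∈ frontier (convexHull ℝ (S : Set Pt))) :
    ∃ l : List Pt, PlaneSpanningPath (S : Set Pt) l ∧
      l.head? = some s ∧ l.getLast? = some t :=
  hgp.exists_planeSpanningPath (hgp.extremePt_of_mem_frontier hs hsb)
    (hgp.extremePt_of_mem_frontier ht htb) hst
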